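/- For any λ* ∈ ℝ^N and any ε > 0, AdaBoost.S achieves loss at most L(λ*) + ε within 3·‖λ*‖₁²/ε rounds; that is, for every integer t ≥ 3·‖λ*‖₁²/ε one has L(λ^t) ≤ L(λ*) + ε. -/

import Mathlib

/-- The exponential loss `L(λ) = (1/m) ∑ᵢ exp(−(Mλ)ᵢ)`. -/
noncomputable def expLoss {m N : ℕ} (M : Matrix (Fin m) (Fin N) ℝ) (lam : Fin N → ℝ) : ℝ :=
  (1 / (m : ℝ)) * ∑ i, Real.exp (-(M.mulVec lam i))

/-- AdaBoost's distribution `D(i) ∝ exp(−(Mλ)ᵢ)`. -/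
noncomputable def wt {m N : ℕ} (M : Matrix (Fin m) (Fin N) ℝ) (lam : Fin N → ℝ) (i : Fin m) : ℝ :=
  Real.exp (-(M.mulVec lam i)) / ∑ i', Real.exp (-(M.mulVec lam i'))

/-- The ℓ₁-norm on `ℝ^N`. -/
noncomputable def l1 {N : ℕ} (v : Fin N → ℝ) : ℝ := ∑ j, |v j|


/-- `lam`, `j`, `r`, `s` describe a run of AdaBoost.S on feature matrix `M`:
`lam 0 = 0`; at each round the coordinate `j t` of maximal absolute correlation is chosen,
`r t` is its correlation, the step is `α_t = ½ ln((1+r_t)/(1−r_t))` giving the intermediate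
combination `λ̃ = λ^{t} + α·e_{j t}`, and then `λ^{t+1} = s_t·λ̃` where
`s_t ∈ argmin_{s ∈ [0,1]} L(s·λ̃)`. -/
def IsAdaBoostS {m N : ℕ} (M : Matrix (Fin m) (Fin N) ℝ)
    (lam : ℕ → Fin N → ℝ) (j : ℕ → Fin N) (r : ℕ → ℝ) (s : ℕ → ℝ) : Prop :=
  lam 0 = 0 ∧
  ∀ t : ℕ,
    (∀ j' : Fin N, |∑ i, wt M (lam t) i * M i j'| ≤ |∑ i, wt M (lam t) i * M i (j t)|) ∧
    r t = ∑ i, wt M (lam t) i * M i (j t) ∧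
    s t ∈ Set.Icc (0 : ℝ) 1 ∧
    (∀ s' ∈ Set.Icc (0 : ℝ) 1,
      expLoss M (s t • (lam t + Pi.single (j t) ((1 / 2) * Real.log ((1 + r t) / (1 - r t))))) ≤
      expLoss M (s' • (lam t + Pi.single (j t) ((1 / 2) * Real.log ((1 + r t) / (1 - r t)))))) ∧
    lam (t + 1) = s t • (lam t + Pi.single (j t) ((1 / 2) * Real.log ((1 + r t) / (1 - r t))))

/-!
Write `E_t = L(λ^t) − L(λ*)` and `B = ‖λ*‖₁`. Each round multiplies the loss by at most
`√(1 − r_t²) ≤ 1 − r_t²/2`, so the losses decrease from `L(λ⁰) = 1`. Optimality of the scaling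
`s_t` against the competitor `s = 0` gives `∑ᵢ D(i)(Mλ^t)ᵢ ≥ 0`; together with the tangent-line
bound for `exp` and the maximality of the edge this yields `E_t ≤ L(λ^t)·|r_t|·B`. Hence
`E_t² ≤ L(λ^t)·r_t²·B² ≤ 2B²(E_t − E_{t+1})`, so `1/E_t` grows by at least `1/(2B²)` per round
and `E_t ≤ ε` as soon as `t ≥ 2B²/ε`.
-/

open Finset Matrix Real

theorem IsMinOn.hasDerivAt_mul_sub_nonneg {f : ℝ → ℝ} {S : Set ℝ} {a f' y : ℝ}
    (hS : Convex ℝ S) (hmin : IsMinOn f S a) (hf : HasDerivAt f f' a) (ha : a ∈ S)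
    (hy : y ∈ S) : 0 ≤ f' * (y - a) := by
  simpa [mul_comm] using hmin.localize.hasFDerivWithinAt_nonneg
    hf.hasFDerivAt.hasFDerivWithinAt
    (sub_mem_posTangentConeAt_of_segment_subset (hS.segment_subset ha hy))

namespace Real

theorem exp_neg_sub_exp_neg_le (x y : ℝ) : exp (-x) - exp (-y) ≤ exp (-x) * (y - x) := by
  have h : exp (-y) = exp (-x) * exp (x - y) := by rw [← exp_add]; ring_nf
  nlinarith [add_one_le_exp (x - y), exp_pos (-x)]

theorem sqrt_one_sub_le {x : ℝ} (hx : x ≤ 1) : √(1 - x) ≤ 1 - x / 2 :=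
  (sqrt_le_left (by linarith)).2 (by nlinarith [sq_nonneg x])

end Real

theorem dotProduct_le_mul_l1 {N : ℕ} {δ : ℝ} (x w : Fin N → ℝ) (hx : ∀ k, |x k| ≤ δ) :
    x ⬝ᵥ w ≤ δ * l1 w := by
  rw [l1, mul_sum]
  refine sum_le_sum fun k _ => ?_
  calc x k * w k ≤ |x k| * |w k| := (le_abs_self _).trans (abs_mul _ _).le
    _ ≤ δ * |w k| := mul_le_mul_of_nonneg_right (hx k) (abs_nonneg _)

theorem Antitone.le_of_sq_le_mul_sub_succ {e : ℕ → ℝ} {c ε : ℝ} (hc : 0 ≤ c) (hε : 0 < ε)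
    (he : Antitone e) (hrec : ∀ u, 0 < e u → e u ^ 2 ≤ c * (e u - e (u + 1))) {t : ℕ}
    (ht : c / ε ≤ t) : e t ≤ ε := by
  by_contra! hbig
  have het : 0 < e t := hε.trans hbig
  rcases hc.eq_or_lt with rfl | hc
  · nlinarith [hrec t het]
  have hinv : ∀ u, 0 < e u → (u : ℝ) / c < 1 / e u := by
    intro u
    induction u with
    | zero => intro h; simpa using h
    | succ u ih =>
      intro hsucc
      have hu : 0 < e u := hsucc.trans_le (he u.le_succ)
      have hstep : 1 / e u + 1 / c ≤ 1 / e (u + 1) := by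
        rw [div_add_div _ _ hu.ne' hc.ne', div_le_div_iff₀ (by positivity) hsucc]
        nlinarith [hrec u hu, mul_le_mul_of_nonneg_left (he u.le_succ) hu.le]
      push_cast
      linarith [ih hu, add_div (u : ℝ) 1 c]
  have h1 : 1 / ε ≤ (t : ℝ) / c := by
    rw [div_le_div_iff₀ hε hc, one_mul]
    rwa [div_le_iff₀ hε] at ht
  linarith [hinv t het, one_div_lt_one_div_of_lt hε hbig]

section ExpLoss

variable {m N : ℕ} (M : Matrix (Fin m) (Fin N) ℝ)

theorem sum_exp_neg_mulVec_pos (hm : 0 < m) (v : Fin N → ℝ) :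
    0 < ∑ i, exp (-(M *ᵥ v) i) :=
  haveI : Nonempty (Fin m) := Fin.pos_iff_nonempty.mp hm
  sum_pos (fun _ _ => exp_pos _) univ_nonempty

theorem expLoss_pos (hm : 0 < m) (v : Fin N → ℝ) : 0 < expLoss M v := by
  have := sum_exp_neg_mulVec_pos M hm v
  unfold expLoss
  positivity

theorem expLoss_zero (hm : 0 < m) : expLoss M 0 = 1 := by
  have : (m : ℝ) ≠ 0 := by positivity
  simp [expLoss, this]

theorem wt_nonneg (v : Fin N → ℝ) (i : Fin m) : 0 ≤ wt M v i :=
  div_nonneg (exp_pos _).le (sum_nonneg fun _ _ => (exp_pos _).le)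

theorem sum_wt_eq_one (hm : 0 < m) (v : Fin N → ℝ) : ∑ i, wt M v i = 1 := by
  simp only [wt]
  rw [← sum_div, div_self (sum_exp_neg_mulVec_pos M hm v).ne']

theorem expLoss_mul_wt (hm : 0 < m) (v : Fin N → ℝ) (i : Fin m) :
    expLoss M v * wt M v i = exp (-(M *ᵥ v) i) / m := by
  have := (sum_exp_neg_mulVec_pos M hm v).ne'
  simp only [expLoss, wt]
  field_simp

theorem abs_sum_wt_mul_le_one (hm : 0 < m) (hM : ∀ i j, |M i j| ≤ 1) (v : Fin N → ℝ)
    (k : Fin N) : |∑ i, wt M v i * M i k| ≤ 1 := by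
  calc |∑ i, wt M v i * M i k| ≤ ∑ i, wt M v i := by
        refine (abs_sum_le_sum_abs _ _).trans (sum_le_sum fun i _ => ?_)
        rw [abs_mul, abs_of_nonneg (wt_nonneg M v i)]
        exact mul_le_of_le_one_right (wt_nonneg M v i) (hM i k)
    _ = 1 := sum_wt_eq_one M hm v

theorem expLoss_sub_le (hm : 0 < m) (v w : Fin N → ℝ) :
    expLoss M v - expLoss M w ≤ expLoss M v * ∑ i, wt M v i * ((M *ᵥ w) i - (M *ᵥ v) i) := by
  calc expLoss M v - expLoss M w
      = 1 / (m : ℝ) * ∑ i, (exp (-(M *ᵥ v) i) - exp (-(M *ᵥ w) i)) := by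
        rw [expLoss, expLoss, ← mul_sub, ← sum_sub_distrib]
    _ ≤ 1 / (m : ℝ) * ∑ i, exp (-(M *ᵥ v) i) * ((M *ᵥ w) i - (M *ᵥ v) i) := by
        gcongr with i
        exact exp_neg_sub_exp_neg_le _ _
    _ = expLoss M v * ∑ i, wt M v i * ((M *ᵥ w) i - (M *ᵥ v) i) := by
        simp only [mul_sum, ← mul_assoc, expLoss_mul_wt M hm]
        ring_nf

theorem hasDerivAt_expLoss_smul (v : Fin N → ℝ) (u : ℝ) :
    HasDerivAt (fun x : ℝ => expLoss M (x • v))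
      (-(1 / (m : ℝ) * ∑ i, exp (-(M *ᵥ (u • v)) i) * (M *ᵥ v) i)) u := by
  simp only [expLoss, mulVec_smul, Pi.smul_apply, smul_eq_mul, ← mul_neg, ← sum_neg_distrib]
  refine .const_mul _ (.fun_sum fun i _ => ?_)
  simpa [mul_comm] using ((hasDerivAt_mul_const ((M *ᵥ v) i)).neg).exp

theorem sum_wt_mul_mulVec_nonneg_of_isMinOn (hm : 0 < m) (v : Fin N → ℝ) {s : ℝ}
    (hs : s ∈ Set.Icc (0 : ℝ) 1)
    (hmin : IsMinOn (fun x : ℝ => expLoss M (x • v)) (Set.Icc 0 1) s) :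
    0 ≤ ∑ i, wt M (s • v) i * (M *ᵥ (s • v)) i := by
  have h := hmin.hasDerivAt_mul_sub_nonneg (convex_Icc 0 1) (hasDerivAt_expLoss_smul M v s) hs
    (Set.left_mem_Icc.2 zero_le_one)
  have hm' : (0 : ℝ) < m := by exact_mod_cast hm
  have hZ := sum_exp_neg_mulVec_pos M hm (s • v)
  have : 0 ≤ s * ∑ i, exp (-(M *ᵥ (s • v)) i) * (M *ᵥ v) i := by
    exact (mul_nonneg_iff_of_pos_left (one_div_pos.2 hm')).1 (h.trans_eq (by ring))
  simp only [wt, div_mul_eq_mul_div, ← sum_div]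
  refine div_nonneg ?_ hZ.le
  simpa [mul_sum, mulVec_smul, mul_left_comm] using this

end ExpLoss

def HasSqrtLossDrop {m N : ℕ} (M : Matrix (Fin m) (Fin N) ℝ) (lam : ℕ → Fin N → ℝ)
    (j : ℕ → Fin N) (r : ℕ → ℝ) : Prop :=
  ∀ t : ℕ, expLoss M (lam t + Pi.single (j t) ((1 / 2) * Real.log ((1 + r t) / (1 - r t)))) ≤
    expLoss M (lam t) * Real.sqrt (1 - r t ^ 2)

namespace IsAdaBoostS

variable {m N : ℕ} {M : Matrix (Fin m) (Fin N) ℝ} {lam : ℕ → Fin N → ℝ} {j : ℕ → Fin N}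
  {r s : ℕ → ℝ}

theorem abs_r_le_one (hAda : IsAdaBoostS M lam j r s) (hm : 0 < m) (hM : ∀ i j, |M i j| ≤ 1)
    (u : ℕ) : |r u| ≤ 1 := by
  rw [(hAda.2 u).2.1]
  exact abs_sum_wt_mul_le_one M hm hM _ _

theorem expLoss_succ_le (hAda : IsAdaBoostS M lam j r s) (hm : 0 < m) (hM : ∀ i j, |M i j| ≤ 1)
    (hdrop : HasSqrtLossDrop M lam j r) (u : ℕ) :
    expLoss M (lam (u + 1)) ≤ expLoss M (lam u) * (1 - r u ^ 2 / 2) := by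
  obtain ⟨-, -, -, hmin, hlam⟩ := hAda.2 u
  have hr : r u ^ 2 ≤ 1 := (sq_le_one_iff_abs_le_one _).2 (hAda.abs_r_le_one hm hM u)
  calc expLoss M (lam (u + 1))
      ≤ expLoss M (lam u + Pi.single (j u) ((1 / 2) * Real.log ((1 + r u) / (1 - r u)))) := by
        simpa only [hlam, one_smul] using hmin 1 (Set.right_mem_Icc.2 zero_le_one)
    _ ≤ expLoss M (lam u) * √(1 - r u ^ 2) := by exact hdrop u
    _ ≤ expLoss M (lam u) * (1 - r u ^ 2 / 2) :=
        mul_le_mul_of_nonneg_left (sqrt_one_sub_le hr) (expLoss_pos M hm _).le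

theorem antitone_expLoss (hAda : IsAdaBoostS M lam j r s) (hm : 0 < m)
    (hM : ∀ i j, |M i j| ≤ 1)
    (hdrop : HasSqrtLossDrop M lam j r) :
    Antitone fun u => expLoss M (lam u) :=
  antitone_nat_of_succ_le fun u => (hAda.expLoss_succ_le hm hM hdrop u).trans <|
    mul_le_of_le_one_right (expLoss_pos M hm _).le (by linarith [sq_nonneg (r u)])

theorem sum_wt_mul_mulVec_nonneg (hAda : IsAdaBoostS M lam j r s) (hm : 0 < m) (u : ℕ) :
    0 ≤ ∑ i, wt M (lam u) i * (M *ᵥ lam u) i := by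
  cases u with
  | zero => simp [hAda.1]
  | succ u =>
    obtain ⟨-, -, hs, hmin, hlam⟩ := hAda.2 u
    rw [hlam]
    exact sum_wt_mul_mulVec_nonneg_of_isMinOn M hm _ hs hmin

theorem expLoss_sub_le_mul_l1 (hAda : IsAdaBoostS M lam j r s) (hm : 0 < m) (u : ℕ)
    (w : Fin N → ℝ) :
    expLoss M (lam u) - expLoss M w ≤ expLoss M (lam u) * |r u| * l1 w := by
  obtain ⟨hmax, hr, -⟩ := hAda.2 u
  have hcorr : wt M (lam u) ⬝ᵥ (M *ᵥ w) ≤ |r u| * l1 w := by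
    rw [dotProduct_mulVec]
    exact dotProduct_le_mul_l1 _ _ fun k => hr ▸ hmax k
  have hscale := hAda.sum_wt_mul_mulVec_nonneg hm u
  calc expLoss M (lam u) - expLoss M w
      ≤ expLoss M (lam u) * ∑ i, wt M (lam u) i * ((M *ᵥ w) i - (M *ᵥ lam u) i) :=
        expLoss_sub_le M hm _ _
    _ ≤ expLoss M (lam u) * (|r u| * l1 w) := by
        refine mul_le_mul_of_nonneg_left ?_ (expLoss_pos M hm _).le
        simp only [mul_sub, sum_sub_distrib]
        exact (sub_le_self _ hscale).trans hcorr
    _ = expLoss M (lam u) * |r u| * l1 w := by ring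

theorem expLoss_le_one (hAda : IsAdaBoostS M lam j r s) (hm : 0 < m) (hM : ∀ i j, |M i j| ≤ 1)
    (hdrop : HasSqrtLossDrop M lam j r) (u : ℕ) :
    expLoss M (lam u) ≤ 1 := by
  simpa [hAda.1, expLoss_zero M hm] using hAda.antitone_expLoss hm hM hdrop u.zero_le

theorem sq_le_mul_sub_succ (hAda : IsAdaBoostS M lam j r s) (hm : 0 < m)
    (hM : ∀ i j, |M i j| ≤ 1)
    (hdrop : HasSqrtLossDrop M lam j r) (w : Fin N → ℝ) (u : ℕ)
    (hpos : 0 < expLoss M (lam u) - expLoss M w) :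
    (expLoss M (lam u) - expLoss M w) ^ 2 ≤
      2 * l1 w ^ 2 *
        ((expLoss M (lam u) - expLoss M w) - (expLoss M (lam (u + 1)) - expLoss M w)) := by
  set L := expLoss M (lam u)
  have hL : 0 < L := expLoss_pos M hm _
  have hdecrease : L * r u ^ 2 ≤ 2 * (L - expLoss M (lam (u + 1))) := by
    linarith [hAda.expLoss_succ_le hm hM hdrop u]
  calc (L - expLoss M w) ^ 2
      ≤ (L * |r u| * l1 w) ^ 2 := pow_le_pow_left₀ hpos.le (hAda.expLoss_sub_le_mul_l1 hm u w) 2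
    _ = L * (L * r u ^ 2) * l1 w ^ 2 := by rw [mul_pow, mul_pow, sq_abs]; ring
    _ ≤ 1 * (2 * (L - expLoss M (lam (u + 1)))) * l1 w ^ 2 := by
        gcongr
        exact hAda.expLoss_le_one hm hM hdrop u
    _ = 2 * l1 w ^ 2 * ((L - expLoss M w) - (expLoss M (lam (u + 1)) - expLoss M w)) := by ring

end IsAdaBoostS

/-- For any `λ*` and `ε > 0`, AdaBoost.S achieves loss at most `L(λ*) + ε`
within `3·‖λ*‖₁²/ε` rounds. -/
theorem adaboostS_rate {m N : ℕ} (hm : 0 < m)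
    (M : Matrix (Fin m) (Fin N) ℝ) (hM : ∀ i j, |M i j| ≤ 1)
    (lam : ℕ → Fin N → ℝ) (j : ℕ → Fin N) (r : ℕ → ℝ) (s : ℕ → ℝ)
    (hAda : IsAdaBoostS M lam j r s)
    (hdrop : ∀ t : ℕ,
      expLoss M (lam t + Pi.single (j t) ((1 / 2) * Real.log ((1 + r t) / (1 - r t)))) ≤
        expLoss M (lam t) * Real.sqrt (1 - r t ^ 2))
    (lamStar : Fin N → ℝ) (ε : ℝ) (hε : 0 < ε)
    (t : ℕ) (ht : 3 * l1 lamStar ^ 2 / ε ≤ (t : ℝ)) :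
    expLoss M (lam t) ≤ expLoss M lamStar + ε := by
  have hanti : Antitone fun u => expLoss M (lam u) - expLoss M lamStar :=
    fun _ _ h => sub_le_sub_right (hAda.antitone_expLoss hm hM hdrop h) _
  have ht' : 2 * l1 lamStar ^ 2 / ε ≤ t :=
    le_trans (by gcongr; norm_num) ht
  have := hanti.le_of_sq_le_mul_sub_succ (by positivity) hε
    (hAda.sq_le_mul_sub_succ hm hM hdrop lamStar) ht'
  linarith
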